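/- arXiv:2211.16030 — 2 statements merged into one kernel-verified Lean document; each statement's English description precedes it below -/
import Mathlib

section
/- With the iteration u_{i,m+1} solving L u_{i,m+1} + (u_{i,m+1}/ε) Σ_{j≠i} u_{j,m}² = 0 in X \ Γ, u_{i,m+1} = φ_i on Γ, starting from the harmonic extension u_{i,0}, the sequence is interlaced: u_{i,0} ≥ u_{i,2} ≥ ⋯ ≥ u_{i,2m} ≥ u_{i,2m+1} ≥ ⋯ ≥ u_{i,3} ≥ u_{i,1} ≥ 0 pointwise, i.e. even iterates decrease, odd iterates increase, and every even iterate dominates every odd iterate. -/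
open Finset

noncomputable def lap {X : Type*} [Fintype X] (w : X → X → ℝ) (u : X → ℝ) (x : X) : ℝ :=
  ∑ y, w x y * (u x - u y)

lemma lap_sub' {X : Type*} [Fintype X] (w : X → X → ℝ) (u v : X → ℝ) (x : X) :
    lap w (fun y => u y - v y) x = lap w u x - lap w v x := by
  simp only [lap]
  rw [← Finset.sum_sub_distrib]
  congr 1; ext y; ring

lemma lap_neg' {X : Type*} [Fintype X] (w : X → X → ℝ) (u : X → ℝ) (x : X) :
    lap w (fun y => -u y) x = -lap w u x := by
  simp only [lap]
  rw [← Finset.sum_neg_distrib]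
  congr 1; ext y; ring

/-- Discrete maximum principle for `L + p`, `p ≥ 0`. -/
lemma mp' {X : Type*} [Fintype X] (w : X → X → ℝ) (hnn : ∀ x y, 0 ≤ w x y)
    (hconn : ∀ x y : X, Relation.ReflTransGen (fun a b => 0 < w a b) x y)
    (Γ : Set X) (hΓ : Γ.Nonempty)
    (p v : X → ℝ) (hp : ∀ x, 0 ≤ p x)
    (hint : ∀ x ∉ Γ, lap w v x + p x * v x ≤ 0)
    (hbd : ∀ x ∈ Γ, v x ≤ 0) : ∀ x, v x ≤ 0 := by
  by_contra hc
  push_neg at hc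
  obtain ⟨z, hz⟩ := hc
  have hne : (Finset.univ : Finset X).Nonempty := ⟨z, Finset.mem_univ z⟩
  obtain ⟨x0, -, hmax⟩ := Finset.exists_max_image Finset.univ v hne
  have hM : 0 < v x0 := lt_of_lt_of_le hz (hmax z (Finset.mem_univ z))
  have key : ∀ a b : X, Relation.ReflTransGen (fun a b => 0 < w a b) a b →
      v a = v x0 → v b = v x0 := by
    intro a b hab
    induction hab with
    | refl => exact id
    | @tail b' c hab hbc ih =>
      intro ha
      have hb' : v b' = v x0 := ih ha
      have hbnot : b' ∉ Γ := by
        intro hmem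
        have := hbd b' hmem
        rw [hb'] at this
        linarith
      have h1 := hint b' hbnot
      have hterm : ∀ y ∈ (Finset.univ : Finset X), 0 ≤ w b' y * (v b' - v y) := by
        intro y _
        apply mul_nonneg (hnn _ _)
        have := hmax y (Finset.mem_univ y)
        rw [hb']
        linarith
      have h3 : 0 ≤ p b' * v b' := mul_nonneg (hp b') (by rw [hb']; linarith)
      have hsum0 : ∑ y, w b' y * (v b' - v y) = 0 := by
        have h2 : 0 ≤ ∑ y, w b' y * (v b' - v y) := Finset.sum_nonneg hterm
        have h4 : lap w v b' = ∑ y, w b' y * (v b' - v y) := rfl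
        rw [h4] at h1
        linarith
      have h5 := (Finset.sum_eq_zero_iff_of_nonneg hterm).mp hsum0 c (Finset.mem_univ c)
      rcases mul_eq_zero.mp h5 with h | h
      · exact absurd h (ne_of_gt hbc)
      · rw [← hb']; linarith
  obtain ⟨γ, hγ⟩ := hΓ
  have h6 := key x0 γ (hconn x0 γ) rfl
  have h7 := hbd γ hγ
  linarith

theorem stmt_13 {X : Type*} [Fintype X] (w : X → X → ℝ)
    (hsym : ∀ x y, w x y = w y x) (hnn : ∀ x y, 0 ≤ w x y)
    (hconn : ∀ x y : X, Relation.ReflTransGen (fun a b => 0 < w a b) x y)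
    (k : ℕ) (Γ : Set X) (hΓ : Γ.Nonempty) (φ : Fin k → X → ℝ)
    (hφ01 : ∀ i, ∀ x ∈ Γ, φ i x = 0 ∨ φ i x = 1)
    (ε : ℝ) (hε : 0 < ε)
    (U : ℕ → Fin k → X → ℝ)
    (h0 : ∀ i : Fin k, (∀ x : X, x ∉ Γ → lap w (U 0 i) x = 0) ∧
      ∀ x ∈ Γ, U 0 i x = φ i x)
    (hrec : ∀ (m : ℕ) (i : Fin k),
      (∀ x : X, x ∉ Γ → lap w (U (m + 1) i) x +
        (U (m + 1) i x / ε) * ∑ j ∈ Finset.univ.erase i, (U m j x) ^ 2 = 0) ∧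
      ∀ x ∈ Γ, U (m + 1) i x = φ i x) :
    (∀ (m : ℕ) (i : Fin k) (x : X), U (2 * m + 2) i x ≤ U (2 * m) i x) ∧
    (∀ (m : ℕ) (i : Fin k) (x : X), U (2 * m + 1) i x ≤ U (2 * m + 3) i x) ∧
    (∀ (m m' : ℕ) (i : Fin k) (x : X), U (2 * m' + 1) i x ≤ U (2 * m) i x) ∧
    (∀ (m : ℕ) (i : Fin k) (x : X), 0 ≤ U (2 * m + 1) i x) := by
  classical
  set q : ℕ → Fin k → X → ℝ :=
    fun m i x => ε⁻¹ * ∑ j ∈ Finset.univ.erase i, (U m j x) ^ 2 with hq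
  have hqnn : ∀ m i x, 0 ≤ q m i x := fun m i x =>
    mul_nonneg (inv_nonneg.mpr hε.le) (Finset.sum_nonneg fun j _ => sq_nonneg _)
  have hsolve : ∀ m i, ∀ x ∉ Γ, lap w (U (m + 1) i) x + q m i x * U (m + 1) i x = 0 := by
    intro m i x hx
    have h := (hrec m i).1 x hx
    have heq : q m i x * U (m + 1) i x
        = (U (m + 1) i x / ε) * ∑ j ∈ Finset.univ.erase i, (U m j x) ^ 2 := by
      simp only [hq]
      rw [div_eq_mul_inv]
      ring
    rw [heq]
    exact h
  have hbd : ∀ m i, ∀ x ∈ Γ, U m i x = φ i x := by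
    intro m i x hx
    cases m with
    | zero => exact (h0 i).2 x hx
    | succ m => exact (hrec m i).2 x hx
  have hφnn : ∀ i, ∀ x ∈ Γ, 0 ≤ φ i x := by
    intro i x hx
    rcases hφ01 i x hx with h | h <;> rw [h] <;> norm_num
  have hnonneg : ∀ m i x, 0 ≤ U m i x := by
    intro m i x
    have key : ∀ y, -(U m i y) ≤ 0 := by
      apply mp' w hnn hconn Γ hΓ (fun y => match m with | 0 => 0 | m + 1 => q m i y)
      · intro y
        cases m with
        | zero => exact le_refl 0
        | succ m => exact hqnn m i y
      · intro y hy
        cases m with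
        | zero =>
          have h := (h0 i).1 y hy
          have h2 : lap w (fun z => -U 0 i z) y = -lap w (U 0 i) y := lap_neg' w (U 0 i) y
          simp only [h2, h]
          norm_num
        | succ m =>
          have h := hsolve m i y hy
          have h2 : lap w (fun z => -U (m + 1) i z) y = -lap w (U (m + 1) i) y :=
            lap_neg' w (U (m + 1) i) y
          simp only [h2]
          linarith
      · intro y hy
        have h := hbd m i y hy
        have := hφnn i y hy
        simp only [h]
        linarith
    have := key x
    linarith
  -- comparison principle
  have hcomp : ∀ (p : X → ℝ), (∀ x, 0 ≤ p x) → ∀ (u u' : X → ℝ),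
      (∀ x ∉ Γ, lap w u x + p x * u x ≤ lap w u' x + p x * u' x) →
      (∀ x ∈ Γ, u x ≤ u' x) → ∀ x, u x ≤ u' x := by
    intro p hp u u' hint hbd' x
    have key : ∀ y, u y - u' y ≤ 0 := by
      apply mp' w hnn hconn Γ hΓ p (fun y => u y - u' y) hp
      · intro y hy
        have h := hint y hy
        have h2 : lap w (fun z => u z - u' z) y = lap w u y - lap w u' y := lap_sub' w u u' y
        simp only [h2]
        ring_nf
        ring_nf at h
        linarith
      · intro y hy
        have := hbd' y hy
        linarith
    have := key x
    linarith
  -- solutions with larger potential are smaller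
  have hstep : ∀ m m' i, (∀ x, q m' i x ≤ q m i x) →
      ∀ x, U (m + 1) i x ≤ U (m' + 1) i x := by
    intro m m' i hqle
    apply hcomp (q m' i) (hqnn m' i)
    · intro x hx
      have h1 := hsolve m i x hx
      have h2 := hsolve m' i x hx
      have h3 : q m' i x * U (m + 1) i x ≤ q m i x * U (m + 1) i x :=
        mul_le_mul_of_nonneg_right (hqle x) (hnonneg (m + 1) i x)
      linarith
    · intro x hx
      rw [hbd (m + 1) i x hx, hbd (m' + 1) i x hx]
  have hqmono : ∀ m m' i, (∀ j x, U m' j x ≤ U m j x) → ∀ x, q m' i x ≤ q m i x := by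
    intro m m' i h x
    apply mul_le_mul_of_nonneg_left _ (inv_nonneg.mpr hε.le)
    apply Finset.sum_le_sum
    intro j _
    exact pow_le_pow_left₀ (hnonneg m' j x) (h j x) 2
  have hT : ∀ m m', (∀ j x, U m' j x ≤ U m j x) →
      ∀ i x, U (m + 1) i x ≤ U (m' + 1) i x :=
    fun m m' h i => hstep m m' i (hqmono m m' i h)
  -- everyone is below the harmonic extension
  have hle0 : ∀ m i x, U (m + 1) i x ≤ U 0 i x := by
    intro m i
    apply hcomp (fun _ => 0) (fun _ => le_refl 0)
    · intro x hx
      have h1 := hsolve m i x hx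
      have h2 := (h0 i).1 x hx
      have h3 : 0 ≤ q m i x * U (m + 1) i x :=
        mul_nonneg (hqnn m i x) (hnonneg (m + 1) i x)
      linarith
    · intro x hx
      rw [hbd (m + 1) i x hx, hbd 0 i x hx]
  -- odd below even at the same level
  have hP : ∀ t i x, U (2 * t + 1) i x ≤ U (2 * t) i x := by
    intro t
    induction t with
    | zero => simpa using hle0 0
    | succ t ih =>
      have s1 := hT (2 * t) (2 * t + 1) ih
      have s2 := hT (2 * t + 1 + 1) (2 * t + 1) s1
      intro i x
      have e1 : 2 * (t + 1) + 1 = 2 * t + 1 + 1 + 1 := by omega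
      have e2 : 2 * (t + 1) = 2 * t + 1 + 1 := by omega
      rw [e1, e2]
      exact s2 i x
  -- even iterates decrease
  have hE : ∀ m i x, U (2 * m + 2) i x ≤ U (2 * m) i x := by
    intro m
    induction m with
    | zero => simpa using hle0 1
    | succ m ih =>
      have s1 := hT (2 * m) (2 * m + 2) ih
      have s2 := hT (2 * m + 2 + 1) (2 * m + 1) s1
      intro i x
      have e1 : 2 * (m + 1) + 2 = 2 * m + 2 + 1 + 1 := by omega
      have e2 : 2 * (m + 1) = 2 * m + 1 + 1 := by omega
      rw [e1, e2]
      exact s2 i x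
  -- odd iterates increase
  have hO : ∀ m i x, U (2 * m + 1) i x ≤ U (2 * m + 3) i x := by
    intro m i x
    have s1 := hT (2 * m) (2 * m + 2) (hE m)
    have e : 2 * m + 3 = 2 * m + 2 + 1 := by omega
    rw [e]
    exact s1 i x
  have evenChain : ∀ m n, m ≤ n → ∀ i x, U (2 * n) i x ≤ U (2 * m) i x := by
    intro m n h
    induction n, h using Nat.le_induction with
    | base => intro i x; exact le_refl _
    | succ n hmn ih =>
      intro i x
      have h1 := hE n i x
      have e : 2 * (n + 1) = 2 * n + 2 := by omega
      rw [e]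
      exact le_trans h1 (ih i x)
  have oddChain : ∀ m n, m ≤ n → ∀ i x, U (2 * m + 1) i x ≤ U (2 * n + 1) i x := by
    intro m n h
    induction n, h using Nat.le_induction with
    | base => intro i x; exact le_refl _
    | succ n hmn ih =>
      intro i x
      have h1 := hO n i x
      have e : 2 * (n + 1) + 1 = 2 * n + 3 := by omega
      rw [e]
      exact le_trans (ih i x) h1
  refine ⟨hE, hO, ?_, fun m i x => hnonneg _ i x⟩
  intro m m' i x
  calc U (2 * m' + 1) i x
      ≤ U (2 * max m m' + 1) i x := oddChain m' (max m m') (le_max_right _ _) i x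
    _ ≤ U (2 * max m m') i x := hP (max m m') i x
    _ ≤ U (2 * m) i x := evenChain m (max m m') (le_max_left _ _) i x
end

section
/- On a finite connected weighted graph X with nonempty boundary Γ and pairwise segregated boundary data φ_i : Γ → {0,1}, the minimizer of J(u) = ½ Σ_i ‖∇u_i‖² − Σ_{i<j} (∇u_i, ∇u_j) over the segregated admissible set K is unique. -/
open Finset

noncomputable def din {X : Type*} [Fintype X] (w : X → X → ℝ) (u v : X → ℝ) : ℝ :=
  (1 / 2) * ∑ x, ∑ y, w x y * (u y - u x) * (v y - v x)

noncomputable def Jseg {X : Type*} [Fintype X] (w : X → X → ℝ) {k : ℕ}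
    (u : Fin k → X → ℝ) : ℝ :=
  (1 / 2) * ∑ i, din w (u i) (u i) -
    ∑ i, ∑ j ∈ Finset.univ.filter (fun j => i < j), din w (u i) (u j)

def Adm {X : Type*} {k : ℕ} (Γ : Set X) (φ : Fin k → X → ℝ) (u : Fin k → X → ℝ) : Prop :=
  (∀ i, ∀ x ∈ Γ, u i x = φ i x) ∧ (∀ i x, 0 ≤ u i x) ∧
    (∀ i j, i ≠ j → ∀ x, u i x * u j x = 0)

noncomputable def hat {X : Type*} [Fintype X] {k : ℕ} (u : Fin k → X → ℝ)
    (i : Fin k) (x : X) : ℝ :=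
  u i x - ∑ j ∈ Finset.univ.erase i, u j x

/-! With `S = ∑ i, u i`, the energy is `Jseg w u = ∑ i, din (u i) (u i) - ½ din S S`, so moving
the single value `u l x` at an interior vertex `x` by `s` changes it by
`s * lap (hat u l) x + O(s²)`. Minimality therefore forces `lap (hat u l) x = 0` where
`u l x > 0`, and `lap (hat u l) x ≥ 0` at every interior vertex.

For two minimizers `u, v` let `M` be the largest value of `|hat u l x - hat v l x|`. Where it
is attained one may arrange, swapping `u` and `v` and changing `l` if necessary, that
`hat u l x - hat v l x = M` and `u l x > 0`; then `hat u l - hat v l` has nonpositive `lap` at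
its maximum, so it equals `M` at every neighbour. By connectedness the discrepancy `M` reaches
`Γ`, where the hats of `u` and `v` agree, so `M = 0`; segregation recovers `u = v` from the
hats. -/

section Dirichlet

variable {X : Type*} [Fintype X] (w : X → X → ℝ)

theorem din_comm (u v : X → ℝ) : din w u v = din w v u := by
  simp only [din, mul_right_comm]

theorem din_add_left (u₁ u₂ v : X → ℝ) : din w (u₁ + u₂) v = din w u₁ v + din w u₂ v := by
  simp only [din, ← mul_add, ← sum_add_distrib]
  congr 1
  exact sum_congr rfl fun _ _ => sum_congr rfl fun _ _ => by simp only [Pi.add_apply]; ring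

theorem din_smul_left (c : ℝ) (u v : X → ℝ) : din w (c • u) v = c * din w u v := by
  simp only [din, Pi.smul_apply, smul_eq_mul, mul_sum]
  exact sum_congr rfl fun _ _ => sum_congr rfl fun _ _ => by ring

noncomputable def dinForm : LinearMap.BilinForm ℝ (X → ℝ) :=
  LinearMap.mk₂ ℝ (din w) (din_add_left w) (din_smul_left w)
    (fun u v₁ v₂ => by simp only [din_comm w u, din_add_left])
    (fun c u v => by simp only [din_comm w u, din_smul_left, smul_eq_mul])

@[simp]
theorem dinForm_apply (u v : X → ℝ) : dinForm w u v = din w u v := rfl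

theorem din_eq_sum_mul_lap (hsym : ∀ x y, w x y = w y x) (u v : X → ℝ) :
    din w u v = ∑ x, v x * lap w u x := by
  have hswap : ∑ x, ∑ y, w x y * (u y - u x) * v y = ∑ x, ∑ y, w x y * (u x - u y) * v x := by
    rw [sum_comm]
    exact sum_congr rfl fun x _ => sum_congr rfl fun y _ => by rw [hsym y x]
  calc din w u v
      = (1 / 2) * ((∑ x, ∑ y, w x y * (u y - u x) * v y)
          + ∑ x, ∑ y, w x y * (u x - u y) * v x) := by
        simp only [din, ← sum_add_distrib]
        congr 1
        exact sum_congr rfl fun _ _ => sum_congr rfl fun _ _ => by ring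
    _ = ∑ x, v x * lap w u x := by
        rw [hswap, ← two_mul, ← mul_assoc, one_div_mul_cancel two_ne_zero, one_mul]
        simp only [lap, mul_sum]
        exact sum_congr rfl fun _ _ => sum_congr rfl fun _ _ => by ring

theorem din_single [DecidableEq X] (hsym : ∀ x y, w x y = w y x) (u : X → ℝ) (x : X) :
    din w u (Pi.single x 1) = lap w u x := by
  simp [din_eq_sum_mul_lap w hsym, Pi.single_apply]

end Dirichlet

theorem sum_sum_eq_sum_add_two_mul_sum_lt {ι : Type*} [Fintype ι] [LinearOrder ι]
    (f : ι → ι → ℝ) (hf : ∀ i j, f i j = f j i) :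
    ∑ i, ∑ j, f i j = ∑ i, f i i + 2 * ∑ i, ∑ j ∈ univ.filter (fun j => i < j), f i j := by
  have hsplit : ∀ i j, f i j = (if i < j then f i j else 0) + (if j < i then f j i else 0)
      + (if i = j then f i j else 0) := by
    intro i j
    rcases lt_trichotomy i j with h | rfl | h
    · simp [h, h.not_gt, h.ne]
    · simp
    · simp [h, h.not_gt, h.ne', hf i j]
  simp only [sum_congr rfl fun i _ => sum_congr rfl fun j _ => hsplit i j, sum_add_distrib,
    sum_ite_eq, mem_univ, if_true, sum_filter]
  rw [sum_comm (f := fun i j => if j < i then f j i else 0)]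
  ring

theorem sum_update_eq_sum_add_sub {ι M : Type*} [Fintype ι] [DecidableEq ι] [AddCommGroup M]
    (f : ι → M) (i : ι) (b : M) : ∑ j, Function.update f i b j = ∑ j, f j + (b - f i) := by
  rw [sum_update_of_mem (mem_univ i), sum_eq_add_sum_sdiff_singleton_of_mem (mem_univ i) f]
  abel

section Energy

variable {X : Type*} [Fintype X] (w : X → X → ℝ) {k : ℕ}

theorem Jseg_eq_sum_sub (u : Fin k → X → ℝ) :
    Jseg w u = ∑ i, din w (u i) (u i) - 1 / 2 * din w (∑ i, u i) (∑ i, u i) := by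
  have hexpand : din w (∑ i, u i) (∑ i, u i) = ∑ i, ∑ j, din w (u i) (u j) := by
    simp only [← dinForm_apply, map_sum, LinearMap.sum_apply]
    exact sum_comm
  rw [hexpand, sum_sum_eq_sum_add_two_mul_sum_lt _ fun i j => din_comm w (u i) (u j), Jseg]
  ring

theorem hat_eq_two_smul_sub_sum (u : Fin k → X → ℝ) (l : Fin k) :
    hat u l = (2 : ℝ) • u l - ∑ i, u i := by
  funext x
  simp only [hat, Pi.sub_apply, Pi.smul_apply, smul_eq_mul, Finset.sum_apply,
    ← add_sum_erase univ (fun i => u i x) (mem_univ l)]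
  ring

theorem Jseg_update_add_smul (u : Fin k → X → ℝ) (l : Fin k) (e : X → ℝ) (s : ℝ) :
    Jseg w (Function.update u l (u l + s • e)) =
      Jseg w u + s * din w (hat u l) e + s ^ 2 / 2 * din w e e := by
  have hdiag : ∑ i, din w (Function.update u l (u l + s • e) i)
        (Function.update u l (u l + s • e) i) =
      ∑ i, din w (u i) (u i) + (din w (u l + s • e) (u l + s • e) - din w (u l) (u l)) := by
    simp only [Function.apply_update (fun _ a => din w a a), sum_update_eq_sum_add_sub]
  rw [Jseg_eq_sum_sub, Jseg_eq_sum_sub, hdiag, sum_update_eq_sum_add_sub, hat_eq_two_smul_sub_sum,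
    add_sub_cancel_left]
  simp only [← dinForm_apply, map_add, map_sub, map_smul, LinearMap.add_apply, LinearMap.sub_apply,
    LinearMap.smul_apply, smul_eq_mul]
  simp only [dinForm_apply, din_comm w e]
  ring

end Energy

section Laplacian

variable {X : Type*} [Fintype X] (w : X → X → ℝ)

theorem lap_add (f g : X → ℝ) (x : X) : lap w (f + g) x = lap w f x + lap w g x := by
  simp only [lap, ← sum_add_distrib, Pi.add_apply]
  exact sum_congr rfl fun _ _ => by ring

theorem lap_sub (f g : X → ℝ) (x : X) : lap w (f - g) x = lap w f x - lap w g x := by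
  simp only [lap, ← sum_sub_distrib, Pi.sub_apply]
  exact sum_congr rfl fun _ _ => by ring

theorem lap_nonneg_of_forall_le (hnn : ∀ x y, 0 ≤ w x y) {f : X → ℝ} {x : X}
    (hmax : ∀ y, f y ≤ f x) : 0 ≤ lap w f x :=
  sum_nonneg fun y _ => mul_nonneg (hnn x y) (sub_nonneg.2 (hmax y))

theorem eq_of_lap_nonpos_of_forall_le (hnn : ∀ x y, 0 ≤ w x y) {f : X → ℝ} {x y : X}
    (hmax : ∀ y, f y ≤ f x) (hlap : lap w f x ≤ 0) (hxy : 0 < w x y) : f y = f x := by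
  have hterms := (sum_eq_zero_iff_of_nonneg fun y _ =>
    mul_nonneg (hnn x y) (sub_nonneg.2 (hmax y))).1
    (le_antisymm hlap (lap_nonneg_of_forall_le w hnn hmax)) y (mem_univ y)
  linarith [(mul_eq_zero.1 hterms).resolve_left hxy.ne']

end Laplacian

section Hat

variable {X : Type*} [Fintype X] {k : ℕ} {v : Fin k → X → ℝ} {l b : Fin k} {x : X}

theorem hat_le (hnn : ∀ i x, 0 ≤ v i x) : hat v l x ≤ v l x :=
  sub_le_self _ (sum_nonneg fun j _ => hnn j x)

theorem hat_eq_self_of_pos (hseg : ∀ i j, i ≠ j → ∀ x, v i x * v j x = 0) (hpos : 0 < v l x) :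
    hat v l x = v l x := by
  rw [hat, sum_eq_zero fun j hj =>
    (mul_eq_zero.1 (hseg j l (ne_of_mem_erase hj) x)).resolve_right hpos.ne', sub_zero]

theorem hat_eq_neg_of_pos (hseg : ∀ i j, i ≠ j → ∀ x, v i x * v j x = 0) (hlb : l ≠ b)
    (hpos : 0 < v b x) : hat v l x = -v b x := by
  have hzero : ∀ j, j ≠ b → v j x = 0 := fun j hj =>
    (mul_eq_zero.1 (hseg j b hj x)).resolve_right hpos.ne'
  rw [hat, hzero l hlb, sum_eq_single_of_mem b (mem_erase.2 ⟨hlb.symm, mem_univ b⟩)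
    fun j _ hj => hzero j hj, zero_sub]

theorem hat_add_hat_nonpos (hnn : ∀ i x, 0 ≤ v i x) (hlb : l ≠ b) : hat v l x + hat v b x ≤ 0 := by
  have hb := single_le_sum (fun j _ => hnn j x) (mem_erase.2 ⟨hlb.symm, mem_univ b⟩)
  have hl := single_le_sum (fun j _ => hnn j x) (mem_erase.2 ⟨hlb, mem_univ l⟩)
  simp only [hat]
  linarith

theorem exists_pos_of_hat_neg (hl : 0 ≤ v l x) (hneg : hat v l x < 0) : ∃ b, b ≠ l ∧ 0 < v b x := by
  have hsum : ∑ j ∈ univ.erase l, (0 : ℝ) < ∑ j ∈ univ.erase l, v j x := by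
    rw [sum_const_zero]
    simp only [hat] at hneg
    linarith
  obtain ⟨b, hb, hpos⟩ := exists_lt_of_sum_lt hsum
  exact ⟨b, ne_of_mem_erase hb, hpos⟩

theorem eq_of_hat_eq {u : Fin k → X → ℝ}
    (hnnu : ∀ i x, 0 ≤ u i x) (hsegu : ∀ i j, i ≠ j → ∀ x, u i x * u j x = 0)
    (hnnv : ∀ i x, 0 ≤ v i x) (hsegv : ∀ i j, i ≠ j → ∀ x, v i x * v j x = 0)
    (hhat : ∀ l x, hat u l x = hat v l x) : u = v := by
  funext l x
  have h := hhat l x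
  rcases (hnnu l x).lt_or_eq with hu | hu <;> rcases (hnnv l x).lt_or_eq with hv | hv
  · rwa [hat_eq_self_of_pos hsegu hu, hat_eq_self_of_pos hsegv hv] at h
  · linarith [hat_eq_self_of_pos hsegu hu, hat_le (l := l) (x := x) hnnv]
  · linarith [hat_eq_self_of_pos hsegv hv, hat_le (l := l) (x := x) hnnu]
  · rw [← hu, ← hv]

end Hat

open Filter Topology in
theorem nonneg_of_eventually_nonneg_mul_add_sq {g c : ℝ}
    (h : ∀ᶠ s in 𝓝[>] (0 : ℝ), 0 ≤ s * g + s ^ 2 * c) : 0 ≤ g := by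
  have hlin : ∀ᶠ s in 𝓝[>] (0 : ℝ), 0 ≤ g + s * c := by
    filter_upwards [h, self_mem_nhdsWithin] with s hs hpos
    exact nonneg_of_mul_nonneg_right (by linarith) (Set.mem_Ioi.1 hpos)
  have hlim : Tendsto (fun s : ℝ => g + s * c) (𝓝[>] 0) (𝓝 g) := by
    have h0 : Tendsto (fun s : ℝ => g + s * c) (𝓝 0) (𝓝 (g + 0 * c)) :=
      tendsto_const_nhds.add (tendsto_id.mul tendsto_const_nhds)
    rw [zero_mul, add_zero] at h0
    exact tendsto_nhdsWithin_of_tendsto_nhds h0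
  exact ge_of_tendsto hlim hlin

theorem Adm.update_update {X : Type*} [DecidableEq X] {k : ℕ} {Γ : Set X} {φ : Fin k → X → ℝ}
    {v : Fin k → X → ℝ} (hv : Adm Γ φ v) {l : Fin k} {x : X} (hx : x ∉ Γ)
    (hothers : ∀ j, j ≠ l → v j x = 0) {t : ℝ} (ht : 0 ≤ t) :
    Adm Γ φ (Function.update v l (Function.update (v l) x t)) := by
  obtain ⟨hbd, hnn, hseg⟩ := hv
  refine ⟨fun i y hy => ?_, fun i y => ?_, fun i j hij y => ?_⟩
  · have hyx : y ≠ x := fun h => hx (h ▸ hy)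
    rcases eq_or_ne i l with rfl | hil
    · simp [hyx, hbd i y hy]
    · simp [hil, hbd i y hy]
  · rcases eq_or_ne i l with rfl | hil
    · rcases eq_or_ne y x with rfl | hyx
      · simpa using ht
      · simpa [hyx] using hnn i y
    · simpa [hil] using hnn i y
  · rcases eq_or_ne y x with rfl | hyx
    · rcases eq_or_ne i l with rfl | hil
      · simp [hij.symm, hothers j hij.symm]
      · simp [hil, hothers i hil]
    · simp only [Function.update_apply]
      split_ifs <;> simp_all

section Minimizer

variable {X : Type*} [Fintype X] [DecidableEq X] (w : X → X → ℝ) {k : ℕ} {Γ : Set X}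
  {φ : Fin k → X → ℝ} {v : Fin k → X → ℝ} {l : Fin k} {x : X}

theorem mul_lap_hat_add_sq_nonneg (hsym : ∀ x y, w x y = w y x) (hv : Adm Γ φ v)
    (hmin : ∀ z, Adm Γ φ z → Jseg w v ≤ Jseg w z) (hx : x ∉ Γ) (hothers : ∀ j, j ≠ l → v j x = 0)
    {s : ℝ} (hs : 0 ≤ v l x + s) :
    0 ≤ s * lap w (hat v l) x + s ^ 2 * (din w (Pi.single x 1) (Pi.single x 1) / 2) := by
  have hupd : Function.update (v l) x (v l x + s) = v l + s • Pi.single x 1 := by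
    funext y
    rcases eq_or_ne y x with rfl | hyx <;> simp [*]
  have hle := hmin _ (hv.update_update hx hothers hs)
  rw [hupd, Jseg_update_add_smul, din_single w hsym] at hle
  linarith

theorem lap_hat_nonneg_of_forall_ne_eq_zero (hsym : ∀ x y, w x y = w y x) (hv : Adm Γ φ v)
    (hmin : ∀ z, Adm Γ φ z → Jseg w v ≤ Jseg w z) (hx : x ∉ Γ)
    (hothers : ∀ j, j ≠ l → v j x = 0) : 0 ≤ lap w (hat v l) x :=
  nonneg_of_eventually_nonneg_mul_add_sq <| eventually_nhdsWithin_of_forall fun s hs =>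
    mul_lap_hat_add_sq_nonneg w hsym hv hmin hx hothers (by linarith [hv.2.1 l x, hs.out])

theorem lap_hat_eq_zero_of_pos (hsym : ∀ x y, w x y = w y x) (hv : Adm Γ φ v)
    (hmin : ∀ z, Adm Γ φ z → Jseg w v ≤ Jseg w z) (hx : x ∉ Γ) (hpos : 0 < v l x) :
    lap w (hat v l) x = 0 := by
  have hothers : ∀ j, j ≠ l → v j x = 0 := fun j hj =>
    (mul_eq_zero.1 (hv.2.2 j l hj x)).resolve_right hpos.ne'
  have hnonpos : 0 ≤ -lap w (hat v l) x := by
    refine nonneg_of_eventually_nonneg_mul_add_sq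
      (c := din w (Pi.single x 1) (Pi.single x 1) / 2) ?_
    filter_upwards [Ioo_mem_nhdsGT hpos] with s hs
    have := mul_lap_hat_add_sq_nonneg w hsym hv hmin hx hothers (s := -s) (by linarith [hs.2])
    rwa [neg_sq, neg_mul_comm] at this
  linarith [lap_hat_nonneg_of_forall_ne_eq_zero w hsym hv hmin hx hothers]

theorem lap_hat_nonneg (hsym : ∀ x y, w x y = w y x) (hnn : ∀ x y, 0 ≤ w x y) (hv : Adm Γ φ v)
    (hmin : ∀ z, Adm Γ φ z → Jseg w v ≤ Jseg w z) (hx : x ∉ Γ) : 0 ≤ lap w (hat v l) x := by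
  by_cases hex : ∃ b, b ≠ l ∧ 0 < v b x
  · obtain ⟨b, hbl, hb⟩ := hex
    have hmax : ∀ y, (hat v l + hat v b) y ≤ (hat v l + hat v b) x := fun y => by
      rw [Pi.add_apply, Pi.add_apply, hat_eq_neg_of_pos hv.2.2 hbl.symm hb,
        hat_eq_self_of_pos hv.2.2 hb, neg_add_cancel]
      exact hat_add_hat_nonpos hv.2.1 hbl.symm
    have := lap_nonneg_of_forall_le w hnn hmax
    rwa [lap_add, lap_hat_eq_zero_of_pos w hsym hv hmin hx hb, add_zero] at this
  · push Not at hex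
    exact lap_hat_nonneg_of_forall_ne_eq_zero w hsym hv hmin hx
      fun j hj => le_antisymm (hex j hj) (hv.2.1 j x)

end Minimizer

section Peak

variable {X : Type*} [Fintype X] {k : ℕ} {Γ : Set X} {φ : Fin k → X → ℝ} {u v : Fin k → X → ℝ}
  {M : ℝ} {l : Fin k} {z : X}

theorem hat_eq_of_mem (hu : Adm Γ φ u) (hv : Adm Γ φ v) {m : Fin k} {γ : X} (hγ : γ ∈ Γ) :
    hat u m γ = hat v m γ := by
  simp only [hat, hu.1 _ γ hγ, hv.1 _ γ hγ]

theorem exists_pos_and_hat_sub_eq (hnnu : ∀ i x, 0 ≤ u i x) (hnnv : ∀ i x, 0 ≤ v i x)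
    (hsegv : ∀ i j, i ≠ j → ∀ x, v i x * v j x = 0)
    (hbound : ∀ m y, |hat u m y - hat v m y| ≤ M) (hM : 0 < M) (hl : hat u l z - hat v l z = M) :
    ∃ m, (0 < u m z ∧ hat u m z - hat v m z = M) ∨ (0 < v m z ∧ hat v m z - hat u m z = M) := by
  by_cases hpos : 0 < u l z
  · exact ⟨l, Or.inl ⟨hpos, hl⟩⟩
  -- Then `hat v l z < 0`, so some other `v b` is positive at `z`, and segregation turns
  -- `hat u l z - hat v l z = M` into `hat v b z - hat u b z ≥ M`.
  obtain ⟨b, hbl, hb⟩ := exists_pos_of_hat_neg (hnnv l z)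
    (by linarith [hat_le (l := l) (x := z) hnnu, not_lt.1 hpos])
  refine ⟨b, Or.inr ⟨hb, le_antisymm ((le_abs_self _).trans ?_) ?_⟩⟩
  · rw [abs_sub_comm]
    exact hbound b z
  · linarith [hat_eq_neg_of_pos hsegv hbl.symm hb, hat_eq_self_of_pos hsegv hb,
      hat_add_hat_nonpos (x := z) hnnu hbl.symm]

variable [DecidableEq X] (w : X → X → ℝ)

theorem hat_sub_eq_of_pos (hsym : ∀ x y, w x y = w y x) (hnn : ∀ x y, 0 ≤ w x y)
    (hu : Adm Γ φ u) (hminu : ∀ z, Adm Γ φ z → Jseg w u ≤ Jseg w z)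
    (hv : Adm Γ φ v) (hminv : ∀ z, Adm Γ φ z → Jseg w v ≤ Jseg w z) {m : Fin k} {y : X}
    (hz : z ∉ Γ) (hpos : 0 < u m z) (hmax : ∀ y, hat u m y - hat v m y ≤ hat u m z - hat v m z)
    (hzy : 0 < w z y) : hat u m y - hat v m y = hat u m z - hat v m z :=
  eq_of_lap_nonpos_of_forall_le (f := hat u m - hat v m) w hnn hmax
    (by linarith [lap_sub w (hat u m) (hat v m) z, lap_hat_eq_zero_of_pos w hsym hu hminu hz hpos,
      lap_hat_nonneg (l := m) w hsym hnn hv hminv hz]) hzy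

theorem exists_abs_hat_sub_eq_of_adj (hsym : ∀ x y, w x y = w y x) (hnn : ∀ x y, 0 ≤ w x y)
    (hu : Adm Γ φ u) (hminu : ∀ z, Adm Γ φ z → Jseg w u ≤ Jseg w z)
    (hv : Adm Γ φ v) (hminv : ∀ z, Adm Γ φ z → Jseg w v ≤ Jseg w z)
    (hbound : ∀ m y, |hat u m y - hat v m y| ≤ M) (hM : 0 < M)
    (hl : |hat u l z - hat v l z| = M) {y : X} (hzy : 0 < w z y) :
    ∃ m, |hat u m y - hat v m y| = M := by
  have hz : z ∉ Γ := fun hz => by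
    rw [hat_eq_of_mem hu hv hz, sub_self, abs_zero] at hl
    exact hM.ne hl
  have hbound' : ∀ m y, |hat v m y - hat u m y| ≤ M := fun m y =>
    abs_sub_comm (hat u m y) _ ▸ hbound m y
  wlog hl' : hat u l z - hat v l z = M generalizing u v
  · obtain ⟨m, hm⟩ := this hv hminv hu hminu hbound' (by rwa [abs_sub_comm]) hbound
      (by linarith [(abs_eq hM.le).1 hl |>.resolve_left hl'])
    exact ⟨m, by rwa [abs_sub_comm]⟩
  obtain ⟨m, ⟨hpos, hm⟩ | ⟨hpos, hm⟩⟩ :=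
    exists_pos_and_hat_sub_eq hu.2.1 hv.2.1 hv.2.2 hbound hM hl'
  · refine ⟨m, ?_⟩
    rw [hat_sub_eq_of_pos w hsym hnn hu hminu hv hminv hz hpos
      (fun y => hm ▸ (le_abs_self _).trans (hbound m y)) hzy, hm, abs_of_pos hM]
  · refine ⟨m, ?_⟩
    rw [abs_sub_comm, hat_sub_eq_of_pos w hsym hnn hv hminv hu hminu hz hpos
      (fun y => hm ▸ (le_abs_self _).trans (hbound' m y)) hzy, hm, abs_of_pos hM]

end Peak

theorem stmt_17_general {X : Type*} [Fintype X] (w : X → X → ℝ)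
    (hsym : ∀ x y, w x y = w y x) (hnn : ∀ x y, 0 ≤ w x y)
    (hconn : ∀ x y : X, Relation.ReflTransGen (fun a b => 0 < w a b) x y)
    (k : ℕ) (Γ : Set X) (hΓ : Γ.Nonempty) (φ : Fin k → X → ℝ)
    (u v : Fin k → X → ℝ) (hu : Adm Γ φ u) (hv : Adm Γ φ v)
    (hminu : ∀ z : Fin k → X → ℝ, Adm Γ φ z → Jseg w u ≤ Jseg w z)
    (hminv : ∀ z : Fin k → X → ℝ, Adm Γ φ z → Jseg w v ≤ Jseg w z) :
    u = v := by
  classical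
  refine eq_of_hat_eq hu.2.1 hu.2.2 hv.2.1 hv.2.2 fun l x => ?_
  by_contra hne
  have : Nonempty (Fin k × X) := ⟨(l, x)⟩
  obtain ⟨p, hp⟩ := Finite.exists_max fun q : Fin k × X => |hat u q.1 q.2 - hat v q.1 q.2|
  set M := |hat u p.1 p.2 - hat v p.1 p.2|
  have hM : 0 < M := (abs_pos.2 (sub_ne_zero.2 hne)).trans_le (hp (l, x))
  have hpeak : ∀ y, ∃ m, |hat u m y - hat v m y| = M := by
    intro y
    induction hconn p.2 y with
    | refl => exact ⟨p.1, rfl⟩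
    | tail _ hzy ih =>
      obtain ⟨m, hm⟩ := ih
      exact exists_abs_hat_sub_eq_of_adj w hsym hnn hu hminu hv hminv (fun m y => hp (m, y)) hM
        hm hzy
  obtain ⟨γ, hγ⟩ := hΓ
  obtain ⟨m, hm⟩ := hpeak γ
  rw [hat_eq_of_mem hu hv hγ, sub_self, abs_zero] at hm
  exact hM.ne hm

theorem stmt_17 {X : Type*} [Fintype X] (w : X → X → ℝ)
    (hsym : ∀ x y, w x y = w y x) (hnn : ∀ x y, 0 ≤ w x y)
    (hconn : ∀ x y : X, Relation.ReflTransGen (fun a b => 0 < w a b) x y)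
    (k : ℕ) (Γ : Set X) (hΓ : Γ.Nonempty) (φ : Fin k → X → ℝ)
    (hφ01 : ∀ i, ∀ x ∈ Γ, φ i x = 0 ∨ φ i x = 1)
    (hφseg : ∀ i j, i ≠ j → ∀ x ∈ Γ, φ i x * φ j x = 0)
    (u v : Fin k → X → ℝ) (hu : Adm Γ φ u) (hv : Adm Γ φ v)
    (hminu : ∀ z : Fin k → X → ℝ, Adm Γ φ z → Jseg w u ≤ Jseg w z)
    (hminv : ∀ z : Fin k → X → ℝ, Adm Γ φ z → Jseg w v ≤ Jseg w z) :
    u = v :=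
  stmt_17_general w hsym hnn hconn k Γ hΓ φ u v hu hv hminu hminv
end
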